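/- There exist constants c_0 ∈ (0,1/4), C_1 ≥ 1 and c_2 > 0 such that the following holds for all integers n, J ≥ 1 and all q ∈ (0,1/2], where ε_{J,q}(n) is defined with this c_0: (i) ε_{J,q}(n) ≤ C_1 · φ_{J,q}(n); (ii) if 1 − (1−q)^n > c_0/(2J) (which holds in particular whenever q ≥ c_0/(nJ)), then ε_{J,q}(n) ≥ max(1/n − q, c_2 · φ_{J,q}(n)); (iii) if 1 − (1−q)^n ≤ c_0/(2J), then ε_{J,q}(n) = −q. -/

import Mathlib

open Finset

/-- `P(Y/n ≥ x)` for `Y ∼ Binomial(n,q)`. -/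
noncomputable def binomTail (n : ℕ) (q : ℝ) (x : ℝ) : ℝ :=
  ∑ k ∈ Finset.range (n + 1),
    if x ≤ (k : ℝ) / n then (n.choose k) * q ^ k * (1 - q) ^ (n - k) else 0

/-- `ε_{J,q}(n) = inf{ε ∈ ℝ : P_{Y∼Binomial(n,q)}(Y/n ≥ q+ε) ≤ c₀/(2J)}`. -/
noncomputable def epsJ (c₀ : ℝ) (J : ℕ) (q : ℝ) (n : ℕ) : ℝ :=
  sInf {e : ℝ | binomTail n q (q + e) ≤ c₀ / (2 * J)}

/-- `φ_{J,q}(n)`. -/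
noncomputable def phi (J : ℕ) (q : ℝ) (n : ℕ) : ℝ :=
  if q = 0 then 0
  else if (n : ℝ) ≤ Real.log (J + 1) / Real.log (1 / q) then 1
  else if (n : ℝ) ≤ Real.log (J + 1) / (Real.exp 1 * q) then
    Real.log (J + 1) / (n * Real.log (Real.log (J + 1) / (n * q)))
  else Real.sqrt (q * Real.log (J + 1) / n)

open Real
open scoped Nat

/-!
Upper bound: Chernoff's inequality gives `P(Y ≥ nq(1+v)) ≤ exp(-nq·h(v))` with Bennett's function
`h(v) = (1+v) log(1+v) - v`, and in each regime of `φ` the deviation `ε = 6000 φ` makes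
`nq·h(ε/q) ≥ 1460 log(J+1)`, which beats `c₀/(2J)` for `c₀ = e^{-1000}`.

Lower bound: by Stirling, `P(Y = k) ≥ exp(-n·KL(k/n ‖ q)) / (3√k)`. For `ε < φ/32` let `m` be
the least integer `≥ max(n(q+ε), nq)`; then `P(Y ≥ m) ≥ e^{-900}/(J+1) > c₀/(2J)`. In the first
regime `P(Y = n) = qⁿ ≥ 1/(J+1)`; in the second `n·KL(m/n ‖ q) ≤ m log(m/(nq)) ≤ log(J+1) + O(1)`;
in the third the χ² bound gives `n·KL(k/n ‖ q) ≤ log(J+1) + 30` for the `⌈√(nq)⌉` integers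
`k` from `m` on, and summing over them absorbs the factor `1/√k`.

Below `1/n` the event `Y/n ≥ x` is `Y ≥ 1`, which gives `1/n - q ≤ ε` in (ii) and all of (iii).
-/

noncomputable def binomTerm (n : ℕ) (q : ℝ) (k : ℕ) : ℝ :=
  n.choose k * q ^ k * (1 - q) ^ (n - k)

section BinomialTail

variable {n : ℕ} {q x : ℝ}

lemma binomTail_eq_sum_binomTerm (n : ℕ) (q x : ℝ) :
    binomTail n q x = ∑ k ∈ range (n + 1), if x ≤ (k : ℝ) / n then binomTerm n q k else 0 :=
  rfl

lemma binomTerm_nonneg (hq0 : 0 ≤ q) (hq1 : q ≤ 1) (k : ℕ) : 0 ≤ binomTerm n q k := by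
  have : 0 ≤ 1 - q := by linarith
  unfold binomTerm; positivity

@[simp] lemma binomTerm_self (n : ℕ) (q : ℝ) : binomTerm n q n = q ^ n := by
  simp [binomTerm]

lemma sum_binomTerm (n : ℕ) (q : ℝ) : ∑ k ∈ range (n + 1), binomTerm n q k = 1 := by
  have h := add_pow q (1 - q) n
  rw [add_sub_cancel, one_pow] at h
  rw [h]
  exact sum_congr rfl fun k _ => by unfold binomTerm; ring

lemma binomTail_antitone (hq0 : 0 ≤ q) (hq1 : q ≤ 1) : Antitone (binomTail n q) := by
  intro x y hxy
  refine sum_le_sum fun k _ => ?_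
  split_ifs with hy hx
  · exact le_rfl
  · exact absurd (hxy.trans hy) hx
  · exact binomTerm_nonneg hq0 hq1 k
  · exact le_rfl

lemma binomTail_of_nonpos (hx : x ≤ 0) : binomTail n q x = 1 := by
  rw [binomTail_eq_sum_binomTerm, ← sum_binomTerm n q]
  exact sum_congr rfl fun k _ => if_pos (hx.trans (by positivity))

lemma binomTail_of_one_lt (hx : 1 < x) : binomTail n q x = 0 := by
  refine sum_eq_zero fun k hk => if_neg (not_le.2 (lt_of_le_of_lt ?_ hx))
  exact div_le_one_of_le₀ (by exact_mod_cast mem_range_succ_iff.1 hk) n.cast_nonneg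

lemma binomTail_of_le_inv (hn : n ≠ 0) (hx0 : 0 < x) (hx : x ≤ 1 / n) :
    binomTail n q x = 1 - (1 - q) ^ n := by
  have hsplit : binomTail n q x = ∑ k ∈ range (n + 1), binomTerm n q k
      - ∑ k ∈ range (n + 1), if k = 0 then binomTerm n q k else 0 := by
    rw [binomTail_eq_sum_binomTerm, ← sum_sub_distrib]
    refine sum_congr rfl fun k _ => ?_
    rcases Nat.eq_zero_or_pos k with rfl | hk
    · simp [hx0]
    · have : x ≤ (k : ℝ) / n := hx.trans (by gcongr; exact_mod_cast hk)
      simp [this, hk.ne']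
  rw [hsplit, sum_binomTerm, sum_ite_eq' _ _ (fun k => binomTerm n q k)]
  simp [binomTerm]

lemma one_sub_pow_le_binomTail (hn : n ≠ 0) (hq0 : 0 ≤ q) (hq1 : q ≤ 1) (hx : x ≤ 1 / n) :
    1 - (1 - q) ^ n ≤ binomTail n q x :=
  binomTail_of_le_inv (q := q) hn (by positivity) le_rfl ▸ binomTail_antitone hq0 hq1 hx

lemma sum_binomTerm_le_binomTail {F : Finset ℕ} (hF : F ⊆ range (n + 1)) (hq0 : 0 ≤ q)
    (hq1 : q ≤ 1) (hx : ∀ k ∈ F, x ≤ (k : ℝ) / n) :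
    ∑ k ∈ F, binomTerm n q k ≤ binomTail n q x := by
  rw [binomTail_eq_sum_binomTerm, ← sum_congr rfl fun k hk => if_pos (hx k hk)]
  refine sum_le_sum_of_subset_of_nonneg hF fun k _ _ => ?_
  split_ifs
  exacts [binomTerm_nonneg hq0 hq1 k, le_rfl]

lemma binomTerm_le_binomTail {k : ℕ} (hk : k ≤ n) (hq0 : 0 ≤ q) (hq1 : q ≤ 1)
    (hx : x ≤ (k : ℝ) / n) : binomTerm n q k ≤ binomTail n q x := by
  simpa using sum_binomTerm_le_binomTail (F := {k}) (by simpa [Nat.lt_succ_iff]) hq0 hq1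
    (by simpa using hx)

lemma binomTail_le_chernoff (hq0 : 0 ≤ q) (hq1 : q ≤ 1) {t : ℝ} (ht : 0 ≤ t) :
    binomTail n q x ≤ exp (-(t * n * x)) * (1 - q + q * exp t) ^ n := by
  have hmgf : (1 - q + q * exp t) ^ n = ∑ k ∈ range (n + 1), binomTerm n q k * exp (t * k) := by
    rw [add_comm, add_pow]
    refine sum_congr rfl fun k _ => ?_
    rw [binomTerm, mul_pow, ← exp_nat_mul, mul_comm (k : ℝ) t]
    ring
  rw [hmgf, mul_sum]
  refine sum_le_sum fun k _ => ?_
  have hterm := binomTerm_nonneg (n := n) hq0 hq1 k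
  split_ifs with hk
  · rw [mul_left_comm, ← exp_add]
    refine le_mul_of_one_le_right hterm (one_le_exp ?_)
    rcases Nat.eq_zero_or_pos n with rfl | hn
    · simp_all
    · rw [le_div_iff₀ (by exact_mod_cast hn)] at hk
      nlinarith
  · positivity

/-- Bennett's function: the Legendre transform of the Poisson log-moment generating function. -/
noncomputable def bennett (v : ℝ) : ℝ := (1 + v) * log (1 + v) - v

/-- Chernoff's bound at the optimal `t = log (1 + v)`. -/
lemma binomTail_le_bennett (hq0 : 0 ≤ q) (hq1 : q ≤ 1) {v : ℝ} (hv : 0 ≤ v) :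
    binomTail n q (q * (1 + v)) ≤ exp (-(n * q * bennett v)) := by
  have h1v : 0 < 1 + v := by linarith
  refine (binomTail_le_chernoff hq0 hq1 (log_nonneg (by linarith : 1 ≤ 1 + v))).trans ?_
  rw [exp_log h1v]
  have hmgf : (1 - q + q * (1 + v)) ^ n ≤ exp (n * (q * v)) := by
    rw [exp_nat_mul, show 1 - q + q * (1 + v) = q * v + 1 by ring]
    exact pow_le_pow_left₀ (by positivity) (add_one_le_exp _) n
  calc exp (-(log (1 + v) * n * (q * (1 + v)))) * (1 - q + q * (1 + v)) ^ n
      ≤ exp (-(log (1 + v) * n * (q * (1 + v)))) * exp (n * (q * v)) := by gcongr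
    _ = _ := by rw [← exp_add, bennett]; ring_nf

end BinomialTail

section BinomialTermLowerBound

open Stirling

lemma log_factorial_le_stirling {k : ℕ} (hk : k ≠ 0) :
    log (k ! : ℝ) ≤ k * log k - k + log k / 2 + 1 := by
  obtain ⟨m, rfl⟩ := Nat.exists_eq_succ_of_ne_zero hk
  have h := log_stirlingSeq'_antitone (Nat.zero_le m)
  simp only [Function.comp, Nat.succ_eq_add_one, zero_add, stirlingSeq_one] at h
  rw [log_stirlingSeq_formula, log_div (exp_pos 1).ne' (by positivity), log_exp,
    log_sqrt (by norm_num), log_mul (by norm_num) (by positivity),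
    log_div (by positivity) (exp_pos 1).ne', log_exp] at h
  linarith

lemma four_le_log_two_pi_add_two_mul_log_three : 4 ≤ log (2 * π) + 2 * log 3 := by
  rw [show (2 : ℝ) * log 3 = log (3 ^ 2) by rw [log_pow]; norm_num,
    ← log_mul (by positivity) (by positivity), le_log_iff_exp_le (by positivity),
    show (4 : ℝ) = (4 : ℕ) * 1 by norm_num, exp_nat_mul]
  have he : exp 1 ^ 4 ≤ 2.7182818286 ^ 4 := by gcongr; exact exp_one_lt_d9.le
  nlinarith [pi_gt_d2]

/-- `n` times the relative entropy of `Bernoulli (k/n)` with respect to `Bernoulli q`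
(with `0 * log 0 = 0` at `k = n`). -/
noncomputable def binomRate (n : ℕ) (q : ℝ) (k : ℕ) : ℝ :=
  k * log (k / (n * q)) + (n - k) * log ((n - k) / (n * (1 - q)))

variable {n k : ℕ} {q : ℝ}

lemma log_binomTerm (hq0 : 0 < q) (hq1 : q < 1) (hkn : k ≤ n) :
    log (binomTerm n q k) = log (n ! : ℝ) - log (k ! : ℝ) - log ((n - k) ! : ℝ)
      + k * log q + (n - k : ℕ) * log (1 - q) := by
  have hchoose : (n.choose k : ℝ) * k ! * (n - k)! = n ! := by
    exact_mod_cast Nat.choose_mul_factorial_mul_factorial hkn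
  have hc : (n.choose k : ℝ) ≠ 0 := by exact_mod_cast (Nat.choose_pos hkn).ne'
  rw [binomTerm, log_mul (by positivity) (by positivity), log_mul hc (by positivity),
    log_pow, log_pow, ← hchoose, log_mul (by positivity) (by positivity),
    log_mul hc (by positivity)]
  ring

lemma exp_neg_binomRate_le_binomTerm (hq0 : 0 < q) (hq1 : q < 1) (hk : k ≠ 0) (hkn : k ≤ n) :
    exp (-(binomRate n q k + log k / 2 + log 3)) ≤ binomTerm n q k := by
  have hk0 : (0 : ℝ) < k := by exact_mod_cast Nat.pos_of_ne_zero hk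
  have hlog3 : 0 ≤ log 3 := log_nonneg (by norm_num)
  have hlogk : 0 ≤ log k := log_nonneg (by exact_mod_cast Nat.one_le_iff_ne_zero.2 hk)
  rcases hkn.eq_or_lt with rfl | hkn
  · rw [binomTerm_self, binomRate, sub_self, zero_mul, add_zero,
      div_mul_cancel_left₀ hk0.ne', log_inv, ← exp_log (pow_pos hq0 k), log_pow]
    gcongr
    linarith
  have hterm : 0 < binomTerm n q k := by
    have := Nat.choose_pos hkn.le
    have : 0 < 1 - q := by linarith
    unfold binomTerm; positivity
  rw [← exp_log hterm, exp_le_exp, log_binomTerm hq0 hq1 hkn.le, binomRate]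
  have hj : n - k ≠ 0 := Nat.sub_ne_zero_of_lt hkn
  have hj0 : (0 : ℝ) < (n - k : ℕ) := by exact_mod_cast Nat.pos_of_ne_zero hj
  have hn0 : (0 : ℝ) < n := by exact_mod_cast (Nat.zero_lt_of_lt hkn)
  have hjn : log ((n - k : ℕ) : ℝ) ≤ log n := log_le_log hj0 (by exact_mod_cast Nat.sub_le n k)
  have hn := le_log_factorial_stirling (Nat.zero_lt_of_lt hkn).ne'
  have hkf := log_factorial_le_stirling hk
  have hjf := log_factorial_le_stirling hj
  push_cast [hkn.le] at hj0 hjn hjf ⊢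
  rw [log_div hk0.ne' (by positivity), log_mul hn0.ne' hq0.ne',
    log_div (by linarith) (by nlinarith), log_mul hn0.ne' (by linarith)]
  linarith [four_le_log_two_pi_add_two_mul_log_three]

end BinomialTermLowerBound

section EpsJ

variable {c₀ : ℝ} {J n : ℕ} {q : ℝ}

lemma epsJ_le_of_binomTail_le (ht : c₀ / (2 * J) < 1) {e : ℝ}
    (he : binomTail n q (q + e) ≤ c₀ / (2 * J)) : epsJ c₀ J q n ≤ e := by
  refine csInf_le ⟨-q, fun b hb => ?_⟩ he
  by_contra! hbq
  have : binomTail n q (q + b) = 1 := binomTail_of_nonpos (by linarith)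
  exact absurd hb (by simp only [Set.mem_ofPred_eq, this]; linarith)

lemma le_epsJ_of_lt_binomTail (ht : 0 ≤ c₀ / (2 * J)) {b : ℝ}
    (hb : ∀ e < b, c₀ / (2 * J) < binomTail n q (q + e)) : b ≤ epsJ c₀ J q n := by
  have hne : (2 - q) ∈ {e : ℝ | binomTail n q (q + e) ≤ c₀ / (2 * J)} := by
    simp only [Set.mem_ofPred_eq, add_sub_cancel, binomTail_of_one_lt one_lt_two, ht]
  refine le_csInf ⟨_, hne⟩ fun e he => ?_
  by_contra! heb
  exact (hb e heb).not_ge he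

lemma epsJ_eq_neg (hn : n ≠ 0) (hq0 : 0 ≤ q) (hq1 : q ≤ 1) (ht : c₀ / (2 * J) < 1)
    (h : 1 - (1 - q) ^ n ≤ c₀ / (2 * J)) : epsJ c₀ J q n = -q := by
  have hset : {e : ℝ | binomTail n q (q + e) ≤ c₀ / (2 * J)} = Set.Ioi (-q) := by
    ext e
    simp only [Set.mem_ofPred_eq, Set.mem_Ioi]
    constructor
    · intro he
      by_contra! heq
      rw [binomTail_of_nonpos (by linarith)] at he
      linarith
    · intro he
      have hx : 0 < min (q + e) (1 / n) := lt_min (by linarith) (by positivity)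
      calc binomTail n q (q + e) ≤ binomTail n q (min (q + e) (1 / n)) :=
            binomTail_antitone hq0 hq1 (min_le_left _ _)
        _ = 1 - (1 - q) ^ n := binomTail_of_le_inv hn hx (min_le_right _ _)
        _ ≤ c₀ / (2 * J) := h
  rw [epsJ, hset, csInf_Ioi]

end EpsJ

section Phi

variable {J n : ℕ} {q : ℝ}

lemma log_le_div_exp_one {x : ℝ} (hx : 0 < x) : log x ≤ x / exp 1 := by
  have := log_le_sub_one_of_pos (show 0 < x / exp 1 by positivity)
  rw [log_div hx.ne' (exp_pos 1).ne', log_exp] at this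
  linarith

lemma le_log_div_of_exp_mul_le {a L : ℝ} (ha : 0 < a) (haL : exp 1 * a ≤ L) :
    1 ≤ log (L / a) := by
  rw [← log_exp 1]
  exact log_le_log (exp_pos 1) (by rw [le_div_iff₀ ha]; linarith)

lemma log_nat_add_one_nonneg (J : ℕ) : 0 ≤ log (J + 1 : ℝ) :=
  log_nonneg (by linarith [(J.cast_nonneg : (0 : ℝ) ≤ J)])

lemma log_two_le_log_nat_add_one (hJ : 1 ≤ J) : log 2 ≤ log (J + 1 : ℝ) :=
  log_le_log two_pos (by linarith [(Nat.one_le_cast.2 hJ : (1 : ℝ) ≤ J)])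

lemma phi_nonneg (hn : 0 < n) (hq : 0 < q) : 0 ≤ phi J q n := by
  have hn0 : (0 : ℝ) < n := by exact_mod_cast hn
  have hL := log_nat_add_one_nonneg J
  rw [phi, if_neg hq.ne']
  split_ifs with h1 h2
  · exact zero_le_one
  · have haL : exp 1 * (n * q) ≤ log (J + 1) := by
      rwa [le_div_iff₀ (by positivity), mul_left_comm] at h2
    have := le_log_div_of_exp_mul_le (by positivity) haL
    positivity
  · positivity

lemma phi_le_one (hq : 0 < q) (hq2 : q ≤ 1 / 2) : phi J q n ≤ 1 := by
  have hL := log_nat_add_one_nonneg J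
  rw [phi, if_neg hq.ne']
  split_ifs with h1 h2
  · exact le_rfl
  · rcases n.eq_zero_or_pos with rfl | hn
    · simp
    have hn0 : (0 : ℝ) < n := by exact_mod_cast hn
    have haL : exp 1 * (n * q) ≤ log (J + 1) := by
      rwa [le_div_iff₀ (by positivity), mul_left_comm] at h2
    have hl := le_log_div_of_exp_mul_le (by positivity) haL
    have hlq : 0 < log (1 / q) := log_pos (by rw [lt_div_iff₀ hq]; linarith)
    have hLn : log (J + 1) < n * log (1 / q) := by rwa [not_le, div_lt_iff₀ hlq] at h1
    rw [div_le_one (by positivity)]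
    rcases le_or_gt (log (J + 1)) n with hLn' | hLn'
    · nlinarith
    · have hL0 : 0 < log (J + 1 : ℝ) := hn0.trans hLn'
      have hsplit : log (log (J + 1) / (n * q)) = log (log (J + 1) / n) + log (1 / q) := by
        rw [← log_mul (by positivity) (by positivity)]; congr 1; field_simp
      have : 0 < log (log (J + 1) / n) := log_pos (by rwa [one_lt_div hn0])
      nlinarith
  · rw [sqrt_le_one]
    rcases n.eq_zero_or_pos with rfl | hn
    · simp
    have hLa : log (J + 1) < exp 1 * q * n := by
      rwa [not_le, div_lt_iff₀ (by positivity), mul_comm (n : ℝ)] at h2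
    refine div_le_one_of_le₀ ?_ (Nat.cast_nonneg n)
    have hqq : q * q ≤ 1 / 4 := by nlinarith
    have : exp 1 * q * q ≤ 1 := by
      nlinarith [exp_one_lt_d9, mul_le_mul_of_nonneg_left hqq (exp_pos 1).le]
    nlinarith [mul_le_mul_of_nonneg_left hLa.le hq.le]

end Phi

section UpperBound

variable {J n : ℕ} {q : ℝ}

lemma exp_neg_le_threshold (hJ : 1 ≤ J) {E : ℝ} (hE : 1460 * log (J + 1) ≤ E) :
    exp (-E) ≤ exp (-1000) / (2 * J) := by
  have hJ1 : (1 : ℝ) ≤ J := by exact_mod_cast hJ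
  have hlog2 := log_two_le_log_nat_add_one hJ
  have hlog2J : log (2 * J) ≤ 2 * log (J + 1) := by
    rw [log_mul two_ne_zero (by positivity)]
    linarith [log_le_log (by positivity) (by linarith : (J : ℝ) ≤ J + 1)]
  rw [le_div_iff₀ (by positivity), ← exp_log (by positivity : (0 : ℝ) < 2 * J), ← exp_add,
    exp_le_exp]
  linarith [log_two_gt_d9]

lemma bennett_le_of_exp_mul_le {a L : ℝ} (ha : 0 < a) (haL : exp 1 * a ≤ L) :
    1460 * L ≤ a * bennett (6000 * L / (a * log (L / a))) := by
  have hL : 0 < L := lt_of_lt_of_le (by positivity) haL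
  have hl := le_log_div_of_exp_mul_le ha haL
  set l := log (L / a)
  set v := 6000 * L / (a * l) with hv_def
  have hv : 0 < v := by positivity
  have hlogv : log v = log 6000 + l - log l := by
    rw [show v = 6000 * (L / a) / l by rw [hv_def]; field_simp,
      log_div (by positivity) (by positivity), log_mul (by norm_num) (by positivity)]
  have hlogl := log_le_div_exp_one (by positivity : 0 < l)
  have hl37 : l / exp 1 ≤ 0.37 * l := by
    rw [div_le_iff₀ (exp_pos 1)]; nlinarith [exp_one_gt_d9]
  have hlog6000 : 1 ≤ log 6000 := by
    rw [← log_exp 1]; exact log_le_log (exp_pos 1) (by linarith [exp_one_lt_d9])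
  -- `log (1 + v) ≥ log v ≈ l`, and `v · l = 6000 L / a`
  have hlam : 0.63 * l ≤ log (1 + v) - 1 := by
    linarith [log_le_log hv (by linarith : v ≤ 1 + v)]
  have hval : a * v * (0.63 * l) = 3780 * L := by
    rw [hv_def]; field_simp; ring
  rw [bennett]
  nlinarith [mul_le_mul_of_nonneg_left hlam (by positivity : 0 ≤ a * v),
    log_nonneg (by linarith : 1 ≤ 1 + v)]

lemma bennett_le_of_lt_exp_mul {a L : ℝ} (ha : 0 < a) (hL : 0 ≤ L) (hLa : L < exp 1 * a) :
    1460 * L ≤ a * bennett (6000 * √(L / a)) := by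
  set v := 6000 * √(L / a) with hv_def
  have hv : 0 ≤ v := by positivity
  have hv12 : v ≤ 12000 := by
    have : √(L / a) ≤ 2 := by
      rw [sqrt_le_left (by norm_num), div_le_iff₀ ha]
      nlinarith [exp_one_lt_d9]
    linarith
  have hav : a * v ^ 2 = 36000000 * L := by
    rw [hv_def, mul_pow, sq_sqrt (by positivity)]; field_simp; ring
  have hquad : v ^ 2 / (v + 2) ≤ bennett v := by
    have h := mul_le_mul_of_nonneg_left (le_log_one_add_of_nonneg hv) (by linarith : 0 ≤ 1 + v)
    have : (1 + v) * (2 * v / (v + 2)) - v = v ^ 2 / (v + 2) := by field_simp; ring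
    rw [bennett]; linarith
  calc 1460 * L ≤ a * v ^ 2 / (v + 2) := by
        rw [hav, le_div_iff₀ (by linarith)]; nlinarith
    _ ≤ a * bennett v := by
        rw [mul_div_assoc]; exact mul_le_mul_of_nonneg_left hquad ha.le

lemma binomTail_le_threshold_of_bennett (hJ : 1 ≤ J) (hq0 : 0 ≤ q) (hq1 : q ≤ 1) {v : ℝ}
    (hv : 0 ≤ v) (h : 1460 * log (J + 1) ≤ n * q * bennett v) :
    binomTail n q (q * (1 + v)) ≤ exp (-1000) / (2 * J) :=
  (binomTail_le_bennett hq0 hq1 hv).trans (exp_neg_le_threshold hJ h)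

theorem binomTail_le_threshold (hn : 1 ≤ n) (hJ : 1 ≤ J) (hq : 0 < q) (hq2 : q ≤ 1 / 2) :
    binomTail n q (q + 6000 * phi J q n) ≤ exp (-1000) / (2 * J) := by
  have hn0 : (0 : ℝ) < n := by exact_mod_cast hn
  have hq1 : q ≤ 1 := by linarith
  have ha : 0 < n * q := by positivity
  have hL := log_nat_add_one_nonneg J
  rw [phi, if_neg hq.ne']
  split_ifs with h1 h2
  · rw [binomTail_of_one_lt (by linarith)]
    positivity
  · have haL : exp 1 * (n * q) ≤ log (J + 1) := by
      rwa [le_div_iff₀ (by positivity), mul_left_comm] at h2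
    have hl := le_log_div_of_exp_mul_le ha haL
    rw [show q + 6000 * (log (J + 1) / (n * log (log (J + 1) / (n * q)))) =
      q * (1 + 6000 * log (J + 1) / (n * q * log (log (J + 1) / (n * q)))) by
        field_simp]
    exact binomTail_le_threshold_of_bennett hJ hq.le hq1 (by positivity)
      (bennett_le_of_exp_mul_le ha haL)
  · have hLa : log (J + 1) < exp 1 * (n * q) := by
      rwa [not_le, div_lt_iff₀ (by positivity), mul_left_comm] at h2
    have hsq : √(q * log (J + 1) / n) = q * √(log (J + 1) / (n * q)) := by
      rw [sqrt_eq_iff_eq_sq (by positivity) (by positivity), mul_pow, sq_sqrt (by positivity)]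
      field_simp
    rw [hsq, show q + 6000 * (q * √(log (J + 1) / (n * q))) =
      q * (1 + 6000 * √(log (J + 1) / (n * q))) by ring]
    exact binomTail_le_threshold_of_bennett hJ hq.le hq1 (by positivity)
      (bennett_le_of_lt_exp_mul ha hL hLa)

end UpperBound

section LowerBound

variable {J n m k : ℕ} {q x e L : ℝ}

lemma threshold_lt_exp_neg (hJ : 1 ≤ J) :
    exp (-1000) / (2 * J) < exp (-(log (J + 1) + 900)) := by
  have hJ1 : (1 : ℝ) ≤ J := by exact_mod_cast hJ
  have hexp : exp (-(log (J + 1) + 900)) = exp (-900) / (J + 1) := by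
    rw [neg_add, exp_add, exp_neg, exp_log (by positivity)]; ring
  rw [hexp, div_lt_div_iff₀ (by positivity) (by positivity)]
  have : exp (-1000) < exp (-900) := exp_lt_exp.2 (by norm_num)
  nlinarith [exp_pos (-1000)]

lemma mul_log_div_le {x y : ℝ} (hx : 0 ≤ x) (hy : 0 < y) : x * log (x / y) ≤ x * (x - y) / y := by
  rcases hx.eq_or_lt with rfl | hx
  · simp
  calc x * log (x / y) ≤ x * (x / y - 1) :=
        mul_le_mul_of_nonneg_left (log_le_sub_one_of_pos (by positivity)) hx.le
    _ = x * (x - y) / y := by field_simp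

lemma binomRate_le_mul_log (hmn : m ≤ n) (ham : n * q ≤ m) :
    binomRate n q m ≤ m * log (m / (n * q)) := by
  have hmn' : (m : ℝ) ≤ n := by exact_mod_cast hmn
  have : ((n : ℝ) - m) * log ((n - m) / (n * (1 - q))) ≤ 0 :=
    mul_nonpos_of_nonneg_of_nonpos (by linarith) (log_nonpos
      (div_nonneg (by linarith) (by nlinarith)) (div_le_one_of_le₀ (by linarith) (by nlinarith)))
  rw [binomRate]; linarith

lemma binomRate_le_chiSq (hq0 : 0 < q) (hq1 : q < 1) (hn : 0 < n) (hkn : k ≤ n) :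
    binomRate n q k ≤ (k - n * q) ^ 2 / (n * q * (1 - q)) := by
  have hn0 : (0 : ℝ) < n := by exact_mod_cast hn
  have hkn' : (k : ℝ) ≤ n := by exact_mod_cast hkn
  have hq1' : 1 - q ≠ 0 := by linarith
  have h1 := mul_log_div_le k.cast_nonneg (by positivity : (0 : ℝ) < n * q)
  have h2 := mul_log_div_le (by linarith : (0 : ℝ) ≤ n - k)
    (by nlinarith : (0 : ℝ) < n * (1 - q))
  have : (k : ℝ) * (k - n * q) / (n * q) + (n - k) * (n - k - n * (1 - q)) / (n * (1 - q))
      = (k - n * q) ^ 2 / (n * q * (1 - q)) := by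
    field_simp; ring
  rw [binomRate]; linarith

lemma exp_neg_le_binomTail_of_mul_log_le (hq0 : 0 < q) (hq1 : q ≤ 1) (hn : n ≠ 0) (hx : x ≤ 1)
    {E : ℝ} (h : n * log (1 / q) ≤ E) : exp (-E) ≤ binomTail n q x := by
  have hqn : exp (-E) ≤ q ^ n := by
    rw [one_div, log_inv] at h
    rw [← exp_log (pow_pos hq0 n), exp_le_exp, log_pow]
    linarith
  refine hqn.trans (binomTerm_self n q ▸ binomTerm_le_binomTail le_rfl hq0.le hq1 ?_)
  rwa [div_self (by exact_mod_cast hn)]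

lemma exp_neg_le_binomTail_of_binomRate_le (hq0 : 0 < q) (hq1 : q < 1) (hm : m ≠ 0)
    (hmn : m ≤ n) (hx : x ≤ (m : ℝ) / n) {E : ℝ} (h : binomRate n q m + log m / 2 + log 3 ≤ E) :
    exp (-E) ≤ binomTail n q x :=
  ((exp_le_exp.2 (neg_le_neg h)).trans (exp_neg_binomRate_le_binomTerm hq0 hq1 hm hmn)).trans
    (binomTerm_le_binomTail hmn hq0.le hq1.le hx)

lemma mul_le_binomTail_of_forall_le {w : ℕ} (hmw : m + w ≤ n + 1) (hq0 : 0 ≤ q) (hq1 : q ≤ 1)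
    (hx : x ≤ (m : ℝ) / n) {c : ℝ} (hc : ∀ k ∈ Ico m (m + w), c ≤ binomTerm n q k) :
    w * c ≤ binomTail n q x := by
  have hsum := sum_binomTerm_le_binomTail (n := n) (x := x) (F := Ico m (m + w))
    (fun k hk => mem_range.2 (by have := (mem_Ico.1 hk).2; omega)) hq0 hq1
    (fun k hk => hx.trans (by gcongr; exact_mod_cast (mem_Ico.1 hk).1))
  have := card_nsmul_le_sum _ _ c hc
  rw [Nat.card_Ico, add_tsub_cancel_left, nsmul_eq_mul] at this
  linarith

/-- The hypothesis comes from `2 ≤ m < a + L / (32 log (L/a)) + 1`. -/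
lemma log_div_le_of_one_lt {a : ℝ} (ha : 0 < a) (hL : 0 < L) (hl : 0 < log (L / a))
    (h : 1 < a + L / (32 * log (L / a))) : log (L / a) ≤ L / 16 + log 32 := by
  rcases le_or_gt a (1 / 2) with ha2 | ha2
  · have : 1 / 2 < L / (32 * log (L / a)) := by linarith
    rw [lt_div_iff₀ (by positivity)] at this
    linarith [log_nonneg (by norm_num : (1 : ℝ) ≤ 32)]
  · have h16 := log_le_sub_one_of_pos (show 0 < L / 16 by positivity)
    calc log (L / a) ≤ log (32 * (L / 16)) :=
          log_le_log (by positivity) (by rw [div_le_iff₀ ha]; nlinarith)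
      _ ≤ L / 16 + log 32 := by rw [log_mul (by norm_num) (by positivity)]; linarith

lemma binomRate_add_le_of_exp_mul_le (hq0 : 0 < q) (hmn : m ≤ n) (hm2 : 2 ≤ m)
    (ham : n * q ≤ m) (haL : exp 1 * (n * q) ≤ L)
    (hm : (m : ℝ) < n * q + L / (32 * log (L / (n * q))) + 1) :
    binomRate n q m + log m / 2 + log 3 ≤ L + 900 := by
  have hn : 0 < n := by omega
  set a := (n : ℝ) * q
  have ha : 0 < a := by positivity
  have hL : 0 < L := lt_of_lt_of_le (by positivity) haL
  have hl := le_log_div_of_exp_mul_le ha haL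
  set l := log (L / a)
  have hm2' : (2 : ℝ) ≤ m := by exact_mod_cast hm2
  have hae : a ≤ 0.37 * L := by nlinarith [exp_one_gt_d9]
  have hwin : L / (32 * l) ≤ L / 32 :=
    div_le_div_of_nonneg_left hL.le (by norm_num) (by linarith)
  have hmL : (m : ℝ) ≤ L := by linarith
  -- `m ≤ L` lets us replace `log (m / a)` by `l`, and `a l ≤ L / e`
  have hrate : binomRate n q m ≤ m * l :=
    (binomRate_le_mul_log hmn ham).trans (mul_le_mul_of_nonneg_left
      (log_le_log (by positivity) (div_le_div_of_nonneg_right hmL ha.le)) (by positivity))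
  have hml : (m : ℝ) * l ≤ a * l + L / 32 + l := by
    have := mul_le_mul_of_nonneg_right hm.le (by linarith : 0 ≤ l)
    have hcancel : L / (32 * l) * l = L / 32 := by field_simp
    linarith
  have hal : a * l ≤ 0.37 * L := by
    have hle := mul_le_mul_of_nonneg_left (log_le_div_exp_one (by positivity : 0 < L / a)) ha.le
    have : a * (L / a / exp 1) = L / exp 1 := by field_simp
    have he : L / exp 1 ≤ 0.37 * L := by
      rw [div_le_iff₀ (exp_pos 1)]; nlinarith [exp_one_gt_d9]
    linarith
  have hlL := log_div_le_of_one_lt ha hL (by linarith) (by linarith)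
  have hlogm : log m ≤ L := by linarith [log_le_sub_one_of_pos (by linarith : (0 : ℝ) < m)]
  nlinarith [log_two_lt_d9, show log 32 = 5 * log 2 by
    rw [show (32 : ℝ) = 2 ^ 5 by norm_num, log_pow]; norm_num, log_three_lt_d9]

lemma binomRate_le_of_abs_sub_le (hq0 : 0 < q) (hq2 : q ≤ 1 / 2) (hkn : k ≤ n)
    (ha : 1 / 4 ≤ n * q) (hL : 0 ≤ L)
    (hdev : |(k : ℝ) - n * q| ≤ √(n * q * L) / 32 + √(n * q) + 1) :
    binomRate n q k ≤ L + 30 := by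
  have hn : 0 < n := by
    rcases n.eq_zero_or_pos with rfl | hn
    · norm_num at ha
    · exact hn
  set a := (n : ℝ) * q
  have hs := sq_sqrt (by positivity : 0 ≤ a * L)
  have hr := sq_sqrt (by positivity : 0 ≤ a)
  have hdev2 : ((k : ℝ) - a) ^ 2 ≤ 3 * (a * L / 1024 + a + 1) := by
    rw [← sq_abs]
    nlinarith [pow_le_pow_left₀ (abs_nonneg _) hdev 2, sq_nonneg (√(a * L) / 32 - √a),
      sq_nonneg (√(a * L) / 32 - 1), sq_nonneg (√a - 1)]
  refine (binomRate_le_chiSq hq0 (by linarith) hn hkn).trans ?_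
  rw [div_le_iff₀ (by nlinarith)]
  nlinarith [mul_nonneg hL (by linarith : (0 : ℝ) ≤ 1 / 2 - q)]

/-- Summing `w` terms pays for the factor `1/√k` of `exp_neg_binomRate_le_binomTerm`. -/
lemma exp_neg_le_binomTail_of_window {w : ℕ} (hw : w ≠ 0) (hmw : m + w ≤ n + 1) (hq0 : 0 ≤ q)
    (hq1 : q ≤ 1) (hx : x ≤ (m : ℝ) / n) (hmw4 : (m : ℝ) + w ≤ 4 * w ^ 2) {E : ℝ}
    (h : ∀ k ∈ Ico m (m + w), exp (-(E + log k / 2)) ≤ binomTerm n q k) :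
    exp (-(E + log 2)) ≤ binomTail n q x := by
  have hw1 : (1 : ℝ) ≤ w := by exact_mod_cast Nat.one_le_iff_ne_zero.2 hw
  have hw0 : (0 : ℝ) < w := by linarith
  have hc : ∀ k ∈ Ico m (m + w), exp (-(E + log 2)) / w ≤ binomTerm n q k := by
    intro k hk
    refine le_trans ?_ (h k hk)
    have hkw : (k : ℝ) + 1 ≤ m + w := by exact_mod_cast (mem_Ico.1 hk).2
    rcases k.eq_zero_or_pos with rfl | hk0
    · rw [div_le_iff₀ hw0, ← exp_log hw0, ← exp_add, exp_le_exp]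
      simp only [Nat.cast_zero, log_zero, zero_div, add_zero]
      linarith [log_nonneg one_le_two, log_nonneg hw1]
    have hk4 : log k / 2 ≤ log 2 + log w := by
      have := log_le_log (by exact_mod_cast hk0) (by linarith : (k : ℝ) ≤ 2 ^ 2 * w ^ 2)
      rw [log_mul (by norm_num) (by positivity), log_pow, log_pow] at this
      push_cast at this; linarith
    rw [div_le_iff₀ hw0, ← exp_log hw0, ← exp_add, exp_le_exp]
    linarith
  calc exp (-(E + log 2)) = w * (exp (-(E + log 2)) / w) := by field_simp
    _ ≤ binomTail n q x := mul_le_binomTail_of_forall_le hmw hq0 hq1 hx hc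

lemma exp_neg_le_binomTail_of_lt_exp_mul (hq0 : 0 < q) (hq2 : q ≤ 1 / 2) (hL2 : log 2 ≤ L)
    (hLa : L < exp 1 * (n * q)) (ham : n * q ≤ m) (hmn : m ≤ n)
    (hm : (m : ℝ) < n * q + √(n * q * L) / 32 + 1) (hx : x ≤ (m : ℝ) / n) :
    exp (-(L + 900)) ≤ binomTail n q x := by
  have hq1 : q < 1 := by linarith
  set a := (n : ℝ) * q
  have hL : 0 < L := lt_of_lt_of_le (log_pos one_lt_two) hL2
  have ha : 1 / 4 ≤ a := by
    have : 0 < a := pos_of_mul_pos_right (hL.trans hLa) (exp_pos 1).le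
    nlinarith [log_two_gt_d9, mul_le_mul_of_nonneg_right exp_one_lt_d9.le this.le]
  have hs : √(a * L) ≤ 2 * a := by
    rw [sqrt_le_left (by positivity)]; nlinarith [exp_one_lt_d9]
  set w := ⌈√a⌉₊
  have hwa : √a ≤ w := Nat.le_ceil _
  have hw : w ≠ 0 := (Nat.ceil_pos.2 (by positivity)).ne'
  have hw1 : (1 : ℝ) ≤ w := by exact_mod_cast Nat.one_le_iff_ne_zero.2 hw
  have hwlt : (w : ℝ) < √a + 1 := Nat.ceil_lt_add_one (sqrt_nonneg a)
  have hm0 : m ≠ 0 := by rintro rfl; norm_num at ham; linarith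
  have hterm : ∀ k, m ≤ k → k < m + w → k ≤ n →
      exp (-(L + 30 + log 3 + log k / 2)) ≤ binomTerm n q k := by
    intro k hmk hkw hkn
    have hmk' : (m : ℝ) ≤ k := by exact_mod_cast hmk
    have hkw' : (k : ℝ) + 1 ≤ m + w := by exact_mod_cast hkw
    have hdev : |(k : ℝ) - a| ≤ √(a * L) / 32 + √a + 1 := by
      rw [abs_of_nonneg (by linarith)]; linarith
    refine (exp_le_exp.2 ?_).trans (exp_neg_binomRate_le_binomTerm hq0 hq1 (by omega) hkn)
    linarith [binomRate_le_of_abs_sub_le hq0 hq2 hkn ha hL.le hdev]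
  by_cases hmw : m + w ≤ n + 1
  · have hmw4 : (m : ℝ) + w ≤ 4 * w ^ 2 := by nlinarith [sq_sqrt (by positivity : 0 ≤ a)]
    refine le_trans ?_ (exp_neg_le_binomTail_of_window hw hmw hq0.le hq1.le hx hmw4
      fun k hk => hterm k (mem_Ico.1 hk).1 (mem_Ico.1 hk).2 (by have := (mem_Ico.1 hk).2; omega))
    exact exp_le_exp.2 (by linarith [log_three_lt_d9, log_two_lt_d9])
  · -- the window overshoots `n`, which forces `n < 16`; use the single term `k = n`
    have hnw : (n : ℝ) + 1 < m + w := by exact_mod_cast not_le.1 hmw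
    have hn16 : (n : ℝ) < 16 := by
      have han : a ≤ n / 2 := by simp only [a]; nlinarith [(Nat.cast_nonneg n : (0 : ℝ) ≤ n)]
      nlinarith [sq_sqrt (by positivity : 0 ≤ a), sqrt_nonneg a]
    have hn0 : n ≠ 0 := by omega
    have hlogn : log n ≤ 15 := by
      linarith [log_le_sub_one_of_pos (by exact_mod_cast Nat.pos_of_ne_zero hn0 : (0 : ℝ) < n)]
    refine le_trans ?_ ((hterm n hmn (by omega) le_rfl).trans
      (binomTerm_le_binomTail le_rfl hq0.le hq1.le ?_))
    · exact exp_le_exp.2 (by linarith [log_three_lt_d9])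
    · rw [div_self (by exact_mod_cast hn0)]
      exact hx.trans (div_le_one_of_le₀ (by exact_mod_cast hmn) (Nat.cast_nonneg n))

lemma exists_nat_between {a y D : ℝ} (ha : 0 ≤ a) (hy : 1 < y) (hD : 0 ≤ D) (hyD : y < a + D)
    (han : a ≤ n) (hyn : y ≤ n) :
    ∃ m : ℕ, 2 ≤ m ∧ m ≤ n ∧ a ≤ m ∧ y ≤ m ∧ (m : ℝ) < a + D + 1 := by
  refine ⟨max ⌈y⌉₊ ⌈a⌉₊, ?_, max_le (Nat.ceil_le.2 hyn) (Nat.ceil_le.2 han), ?_, ?_, ?_⟩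
  · exact le_max_of_le_left (Nat.lt_ceil.2 (by exact_mod_cast hy))
  · exact (Nat.le_ceil a).trans (by exact_mod_cast le_max_right _ _)
  · exact (Nat.le_ceil y).trans (by exact_mod_cast le_max_left _ _)
  · rw [Nat.cast_max, max_lt_iff]
    constructor
    · linarith [Nat.ceil_lt_add_one (by linarith : 0 ≤ y)]
    · linarith [Nat.ceil_lt_add_one ha]

lemma exp_neg_le_binomTail_of_lt_phi (hJ : 1 ≤ J) (hq : 0 < q) (hq2 : q ≤ 1 / 2) (hm2 : 2 ≤ m)
    (hmn : m ≤ n) (ham : n * q ≤ m) (hx : x ≤ (m : ℝ) / n)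
    (hm : (m : ℝ) < n * q + n * phi J q n / 32 + 1) :
    exp (-(log (J + 1) + 900)) ≤ binomTail n q x := by
  have hq1 : q < 1 := by linarith
  have hn0 : (0 : ℝ) < n := by exact_mod_cast (show 0 < n by omega)
  have hL := log_nat_add_one_nonneg J
  rw [phi, if_neg hq.ne'] at hm
  split_ifs at hm with h1 h2
  · have hx1 : x ≤ 1 := hx.trans (div_le_one_of_le₀ (by exact_mod_cast hmn) hn0.le)
    refine exp_neg_le_binomTail_of_mul_log_le hq hq1.le (by omega) hx1 ?_
    have hlq : 0 < log (1 / q) := log_pos (by rw [lt_div_iff₀ hq]; linarith)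
    rw [le_div_iff₀ hlq] at h1
    linarith
  · have haL : exp 1 * (n * q) ≤ log (J + 1) := by
      rwa [le_div_iff₀ (by positivity), mul_left_comm] at h2
    have hl := le_log_div_of_exp_mul_le (by positivity) haL
    rw [show (n : ℝ) * (log (J + 1) / (n * log (log (J + 1) / (n * q)))) / 32 =
      log (J + 1) / (32 * log (log (J + 1) / (n * q))) by field_simp] at hm
    exact exp_neg_le_binomTail_of_binomRate_le hq hq1 (by omega) hmn hx
      (binomRate_add_le_of_exp_mul_le hq hmn hm2 ham haL hm)
  · have hLa : log (J + 1) < exp 1 * (n * q) := by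
      rwa [not_le, div_lt_iff₀ (by positivity), mul_left_comm] at h2
    have hsq : √(n * q * log (J + 1)) = n * √(q * log (J + 1) / n) := by
      rw [sqrt_eq_iff_eq_sq (mul_nonneg (by positivity) hL) (by positivity), mul_pow,
        sq_sqrt (div_nonneg (mul_nonneg hq.le hL) hn0.le)]
      field_simp
    rw [← hsq] at hm
    exact exp_neg_le_binomTail_of_lt_exp_mul hq hq2 (log_two_le_log_nat_add_one hJ) hLa ham
      hmn hm hx

theorem threshold_lt_binomTail (hn : 1 ≤ n) (hJ : 1 ≤ J) (hq : 0 < q) (hq2 : q ≤ 1 / 2)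
    (hyp : exp (-1000) / (2 * J) < 1 - (1 - q) ^ n) (he : e < phi J q n / 32) :
    exp (-1000) / (2 * J) < binomTail n q (q + e) := by
  have hq1 : q ≤ 1 := by linarith
  have hn0 : (0 : ℝ) < n := by exact_mod_cast hn
  rcases le_or_gt (q + e) (1 / n) with hsmall | hbig
  · exact hyp.trans_le (one_sub_pow_le_binomTail (by omega) hq.le hq1 hsmall)
  have hphi0 := phi_nonneg (J := J) hn hq
  have hx1 : q + e ≤ 1 := by linarith [phi_le_one (J := J) (n := n) hq hq2]
  obtain ⟨m, hm2, hmn, ham, hxm, hm⟩ := exists_nat_between (n := n) (a := n * q)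
    (y := n * (q + e)) (by positivity) (by rwa [div_lt_iff₀' hn0] at hbig)
    (by positivity : 0 ≤ n * phi J q n / 32) (by nlinarith) (by nlinarith) (by nlinarith)
  rw [← le_div_iff₀' hn0] at hxm
  exact (threshold_lt_exp_neg hJ).trans_le
    (exp_neg_le_binomTail_of_lt_phi hJ hq hq2 hm2 hmn ham hxm hm)

lemma one_sub_pow_le_inv (hq0 : 0 ≤ q) (hq1 : q ≤ 1) : (1 - q) ^ n ≤ 1 / (1 + n * q) := by
  calc (1 - q) ^ n ≤ exp (-q) ^ n := pow_le_pow_left₀ (by linarith) (one_sub_le_exp_neg q) n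
    _ = 1 / exp (n * q) := by rw [← exp_nat_mul, mul_neg, exp_neg, one_div]
    _ ≤ 1 / (1 + n * q) := by
        gcongr
        linarith [add_one_le_exp (n * q)]

lemma threshold_lt_one_sub_pow {c : ℝ} (hc : 0 < c) (hcJ : c < J) (hn : 0 < n) (hq1 : q ≤ 1)
    (h : c / (n * J) ≤ q) : c / (2 * J) < 1 - (1 - q) ^ n := by
  have hJ : (0 : ℝ) < J := hc.trans hcJ
  have hq0 : 0 ≤ q := (div_pos hc (by positivity)).le.trans h
  have hn0 : (0 : ℝ) < n := by exact_mod_cast hn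
  have hct : c ≤ J * (n * q) := by
    rw [div_le_iff₀ (by positivity)] at h; linarith
  have ht : 0 < n * q := by nlinarith
  have hfrac : c / (2 * J) < 1 - 1 / (1 + n * q) := by
    rw [show 1 - 1 / (1 + n * q) = n * q / (1 + n * q) by field_simp; ring,
      div_lt_div_iff₀ (by positivity) (by positivity)]
    nlinarith
  linarith [one_sub_pow_le_inv (n := n) hq0 hq1]

end LowerBound

theorem stmt13 :
    ∃ c₀ C₁ c₂ : ℝ, 0 < c₀ ∧ c₀ < 1 / 4 ∧ 1 ≤ C₁ ∧ 0 < c₂ ∧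
      ∀ (n J : ℕ), 1 ≤ n → 1 ≤ J →
      ∀ q : ℝ, 0 < q → q ≤ 1 / 2 →
        -- (i)
        epsJ c₀ J q n ≤ C₁ * phi J q n ∧
        -- the parenthetical claim: q ≥ c₀/(nJ) implies 1 - (1-q)^n > c₀/(2J)
        (c₀ / (n * J) ≤ q → c₀ / (2 * J) < 1 - (1 - q) ^ n) ∧
        -- (ii)
        (c₀ / (2 * J) < 1 - (1 - q) ^ n →
          max (1 / n - q) (c₂ * phi J q n) ≤ epsJ c₀ J q n) ∧
        -- (iii)
        (1 - (1 - q) ^ n ≤ c₀ / (2 * J) → epsJ c₀ J q n = -q) := by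
  have hc₀ : exp (-1000) < 1 / 4 := by
    rw [exp_neg]
    exact inv_lt_of_inv_lt₀ (by norm_num) (by linarith [add_one_le_exp (1000 : ℝ)])
  refine ⟨exp (-1000), 6000, 1 / 32, exp_pos _, hc₀, by norm_num, by norm_num,
    fun n J hn hJ q hq hq2 => ?_⟩
  have hJ1 : (1 : ℝ) ≤ J := by exact_mod_cast hJ
  have hn0 : (0 : ℝ) < n := by exact_mod_cast hn
  have hq1 : q ≤ 1 := by linarith
  have ht0 : 0 ≤ exp (-1000) / (2 * J) := by positivity
  have ht1 : exp (-1000) / (2 * J) < 1 := by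
    rw [div_lt_one (by positivity)]; linarith
  refine ⟨epsJ_le_of_binomTail_le ht1 (binomTail_le_threshold hn hJ hq hq2),
    threshold_lt_one_sub_pow (exp_pos _) (by linarith) hn hq1,
    fun hyp => le_epsJ_of_lt_binomTail ht0 fun e he => ?_,
    epsJ_eq_neg (by omega) hq.le hq1 ht1⟩
  rcases lt_max_iff.1 he with he | he
  · exact hyp.trans_le (one_sub_pow_le_binomTail (by omega) hq.le hq1 (by linarith))
  · exact threshold_lt_binomTail hn hJ hq hq2 hyp (by linarith)
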